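/- The commutator of the operator Σ_{i,j≥1} (i+j−1)·pᵢ·pⱼ·∂_{i+j−1} with E₂ satisfies [Σ_{i,j≥1} (i+j−1)·pᵢ·pⱼ·∂_{i+j−1}, E₂] = Σ_{i,j≥1, i+j≥3} (i+j−2)·pᵢ·pⱼ·∂_{i+j−2} as R-linear operators on A. -/
import Mathlib


/- R = ℚ[α], A = R[p₁,p₂,…].
   [Σ_{i,j≥1}(i+j−1)·pᵢ·pⱼ·∂_{i+j−1}, E₂] = Σ_{i,j≥1, i+j≥3}(i+j−2)·pᵢ·pⱼ·∂_{i+j−2}.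
   (On the right-hand side the terms with i+j = 2 have zero coefficient, so the sum
   below over all i,j ≥ 1 with truncated ℕ+-subtraction agrees with the restricted
   sum over i+j ≥ 3.) -/

open MvPolynomial

noncomputable section

abbrev R : Type := Polynomial ℚ
abbrev A : Type := MvPolynomial ℕ+ R

/-- the power-sum generator pᵢ (i ≥ 1) -/
def p (i : ℕ+) : A := X i

/-- the partial derivative ∂/∂pᵢ -/
def d (i : ℕ+) (f : A) : A := pderiv i f

/-- E₂ = Σ_{i≥1} i·p_{i+1}·∂ᵢ -/
def E₂ (f : A) : A := ∑ᶠ i : ℕ+, ((i : ℕ) : R) • (p (i + 1) * d i f)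

/-- the operator Σ_{i,j≥1}(i+j−1)·pᵢ·pⱼ·∂_{i+j−1} -/
def G (f : A) : A :=
  ∑ᶠ i : ℕ+, ∑ᶠ j : ℕ+,
    (((i : ℕ) : R) + ((j : ℕ) : R) - 1) • (p i * p j * d (i + j - 1) f)

-- ## basic d lemmas
lemma d_add (k : ℕ+) (a b : A) : d k (a + b) = d k a + d k b := by simp [d]
lemma d_smul (k : ℕ+) (r : R) (a : A) : d k (r • a) = r • d k a := by simp [d]
lemma d_mul (k : ℕ+) (a b : A) : d k (a * b) = d k a * b + a * d k b := pderiv_mul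
lemma d_zero (k : ℕ+) : d k (0 : A) = 0 := by simp [d]
lemma d_p (k m : ℕ+) : d k (p m) = if k = m then 1 else 0 := by
  classical simp [d, p, pderiv_X, Pi.single_apply, eq_comm]
lemma d_sum (k : ℕ+) (s : Finset ℕ+) (g : ℕ+ → A) :
    d k (∑ i ∈ s, g i) = ∑ i ∈ s, d k (g i) := by simp [d]
lemma d_comm (i j : ℕ+) (f : A) : d i (d j f) = d j (d i f) := by
  induction f using MvPolynomial.induction_on with
  | C => simp [d]
  | add a b ha hb => simp only [d, map_add] at *; rw [ha, hb]
  | mul_X a n ih =>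
      classical
      simp only [d, pderiv_mul, map_add, pderiv_X] at *
      by_cases hi : n = i <;> by_cases hj : n = j <;>
        simp [Pi.single_apply, hi, hj, ih, apply_ite (pderiv i), apply_ite (pderiv j)] <;>
        split_ifs <;> simp_all

-- ## PNat coercion lemmas
lemma pnat_one_le (i : ℕ+) : 1 ≤ (i:ℕ) := i.property
lemma coe_sub (a b : ℕ+) (h : (b:ℕ) < (a:ℕ)) : ((a - b : ℕ+) : ℕ) = (a:ℕ) - (b:ℕ) := by
  rw [PNat.sub_coe, if_pos]; exact_mod_cast h
lemma pn_add (a b : ℕ+) : ((a + b : ℕ+) : ℕ) = (a:ℕ) + (b:ℕ) := rfl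
lemma pn_one : ((1 : ℕ+) : ℕ) = 1 := rfl
lemma coe_m1 (i j : ℕ+) : ((i + j - 1 : ℕ+) : ℕ) = (i:ℕ) + (j:ℕ) - 1 := by
  have hi := pnat_one_le i; have hj := pnat_one_le j
  rw [coe_sub] <;> simp only [pn_add, pn_one] <;> omega
lemma coe_m2 (i j : ℕ+) (h : 3 ≤ (i:ℕ) + (j:ℕ)) : ((i + j - 2 : ℕ+) : ℕ) = (i:ℕ) + (j:ℕ) - 2 := by
  rw [coe_sub] <;> simp only [pn_add, PNat.mk_ofNat, PNat.val_ofNat] <;> omega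
lemma pnat_eq (a b : ℕ+) (h : (a:ℕ) = (b:ℕ)) : a = b := PNat.coe_injective h
lemma pnat_le {a b : ℕ+} (h : (a:ℕ) ≤ (b:ℕ)) : a ≤ b := h
lemma pnat_le' {a b : ℕ+} (h : a ≤ b) : (a:ℕ) ≤ (b:ℕ) := h

-- ## finsum conversions
lemma E2_eq (g : A) (M : ℕ+) (h : ∀ k : ℕ+, ¬ k ≤ M → d k g = 0) :
    E₂ g = ∑ i ∈ Finset.Iic M, ((i : ℕ) : R) • (p (i + 1) * d i g) := by
  apply finsum_eq_finset_sum_of_support_subset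
  intro i hi
  simp only [Function.mem_support] at hi
  simp only [Finset.coe_Iic, Set.mem_Iic]
  by_contra hc
  exact hi (by rw [h i hc, mul_zero, smul_zero])

lemma pair_eq (g : A) (M : ℕ+) (c : ℕ+ → ℕ+ → R) (m : ℕ+ → ℕ+ → ℕ+)
    (hm : ∀ i j : ℕ+, d (m i j) g ≠ 0 → i ≤ M ∧ j ≤ M) :
    (∑ᶠ i : ℕ+, ∑ᶠ j : ℕ+, c i j • (p i * p j * d (m i j) g))
      = ∑ i ∈ Finset.Iic M, ∑ j ∈ Finset.Iic M, c i j • (p i * p j * d (m i j) g) := by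
  have inner : ∀ i : ℕ+, (∑ᶠ j : ℕ+, c i j • (p i * p j * d (m i j) g))
      = ∑ j ∈ Finset.Iic M, c i j • (p i * p j * d (m i j) g) := by
    intro i
    apply finsum_eq_finset_sum_of_support_subset
    intro j hj
    simp only [Function.mem_support] at hj
    simp only [Finset.coe_Iic, Set.mem_Iic]
    refine (hm i j fun h0 => hj ?_).2
    rw [h0, mul_zero, smul_zero]
  rw [finsum_congr inner]
  apply finsum_eq_finset_sum_of_support_subset
  intro i hi
  simp only [Function.mem_support] at hi
  simp only [Finset.coe_Iic, Set.mem_Iic]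
  obtain ⟨j, _, hj⟩ := Finset.exists_ne_zero_of_sum_ne_zero hi
  refine (hm i j fun h0 => hj ?_).1
  rw [h0, mul_zero, smul_zero]

-- ## shift lemma
lemma shift_sum (M : ℕ+) (g : ℕ+ → A) (h1 : g 1 = 0) (h2 : g (M + 1) = 0) :
    ∑ i ∈ Finset.Iic M, g (i + 1) = ∑ i ∈ Finset.Iic M, g i := by
  have hinj : Function.Injective (fun i : ℕ+ => i + 1) := by
    intro a b h
    apply pnat_eq
    have := congrArg (fun x : ℕ+ => (x:ℕ)) h
    simp only [pn_add, pn_one] at this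
    omega
  have e1 : ∑ i ∈ Finset.Iic M, g (i + 1)
      = ∑ i ∈ (Finset.Iic M).map ⟨fun i => i + 1, hinj⟩, g i := by
    rw [Finset.sum_map]; rfl
  have e2 : (Finset.Iic M).map ⟨fun i => i + 1, hinj⟩ = (Finset.Iic (M+1)).erase 1 := by
    ext x
    simp only [Finset.mem_map, Finset.mem_Iic, Function.Embedding.coeFn_mk,
      Finset.mem_erase]
    constructor
    · rintro ⟨a, ha, rfl⟩
      have h1a := pnat_one_le a
      have ha' : (a:ℕ) ≤ (M:ℕ) := pnat_le' ha
      refine ⟨fun hc => ?_, pnat_le ?_⟩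
      · have := congrArg (fun x : ℕ+ => (x:ℕ)) hc
        simp only [pn_add, pn_one] at this; omega
      · simp only [pn_add, pn_one]; omega
    · rintro ⟨hne, hle⟩
      have hle' : (x:ℕ) ≤ (M:ℕ) + 1 := pnat_le' hle
      have hx : 1 < (x:ℕ) := by
        have := pnat_one_le x
        rcases Nat.lt_or_ge 1 (x:ℕ) with h | h
        · exact h
        · exact absurd (pnat_eq x 1 (by simp only [pn_one]; omega)) hne
      have hsub : ((x - 1 : ℕ+) : ℕ) = (x:ℕ) - 1 := coe_sub x 1 hx
      refine ⟨x - 1, pnat_le ?_, pnat_eq _ _ ?_⟩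
      · rw [hsub]; omega
      · simp only [pn_add, pn_one, hsub]; omega
  have e3 : (Finset.Iic M) = (Finset.Iic (M+1)).erase (M+1) := by
    ext x
    simp only [Finset.mem_Iic, Finset.mem_erase]
    constructor
    · intro h
      have h' : (x:ℕ) ≤ (M:ℕ) := pnat_le' h
      refine ⟨fun hc => ?_, pnat_le ?_⟩
      · rw [hc] at h'; simp only [pn_add, pn_one] at h'; omega
      · simp only [pn_add, pn_one]; omega
    · rintro ⟨hne, hle⟩
      have h1' : (x:ℕ) ≤ (M:ℕ) + 1 := pnat_le' hle
      have h2' : (x:ℕ) ≠ (M:ℕ) + 1 := fun hc =>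
        hne (pnat_eq _ _ (by simp only [pn_add, pn_one]; omega))
      exact pnat_le (by omega)
  rw [e1, e2, Finset.sum_erase _ h1, e3, Finset.sum_erase _ h2]

lemma G_def (g : A) : G g = ∑ᶠ i : ℕ+, ∑ᶠ j : ℕ+,
    (((i : ℕ) : R) + ((j : ℕ) : R) - 1) • (p i * p j * d (i + j - 1) g) := rfl

def c1 (i j : ℕ+) : R := ((i : ℕ) : R) + ((j : ℕ) : R) - 1
def Xb (f : A) (i j : ℕ+) : A := p i * p j * d (i + j - 2) f
def Ra (f : A) (i j : ℕ+) : A := (c1 i j * (((i:ℕ):R) + ((j:ℕ):R) - 2)) • Xb f i j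
def Sc (f : A) (i j : ℕ+) : A := ((((i:ℕ):R) - 1) * (((i:ℕ):R) + ((j:ℕ):R) - 2)) • Xb f i j
def Sd (f : A) (i j : ℕ+) : A := ((((j:ℕ):R) - 1) * (((i:ℕ):R) + ((j:ℕ):R) - 2)) • Xb f i j
def Qr (f : A) (i j : ℕ+) : A := (((i:ℕ):R) + ((j:ℕ):R) - 2) • Xb f i j
def Bb (f : A) (i j t : ℕ+) : A :=
  (c1 i j * ((t:ℕ):R)) • (p i * p j * (p (t + 1) * d (i + j - 1) (d t f)))

theorem aux_main (f : A) (N M : ℕ+) (hM : M = N + 2)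
    (hvN : ∀ k : ℕ+, ¬ k ≤ N → d k f = 0) :
    G (E₂ f) - E₂ (G f)
      = ∑ᶠ i : ℕ+, ∑ᶠ j : ℕ+,
          (((i : ℕ) : R) + ((j : ℕ) : R) - 2) • (p i * p j * d (i + j - 2) f) := by
  have hMN : (M:ℕ) = (N:ℕ) + 2 := by rw [hM]; simp [pn_add]
  have hvc : ∀ k : ℕ+, (N:ℕ) < (k:ℕ) → d k f = 0 := fun k h =>
    hvN k (fun hle => by have := pnat_le' hle; omega)
  have hvM : ∀ k : ℕ+, ¬ k ≤ M → d k f = 0 := fun k h =>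
    hvc k (by by_contra hc; exact h (pnat_le (by omega)))
  have hddc : ∀ k t : ℕ+, (N:ℕ) < (k:ℕ) → d k (d t f) = 0 := fun k t h => by
    rw [d_comm, hvc k h, d_zero]
  -- E₂ f as finite sum over Iic M
  have cE2f := E2_eq f M hvM
  -- G f as finite sum over Iic M
  have cGf : G f = ∑ i ∈ Finset.Iic M, ∑ j ∈ Finset.Iic M,
      (((i : ℕ) : R) + ((j : ℕ) : R) - 1) • (p i * p j * d (i + j - 1) f) := by
    rw [G_def]
    apply pair_eq f M _ (fun i j => i + j - 1)
    intro i j hne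
    have h1 : ¬ (N:ℕ) < ((i + j - 1 : ℕ+):ℕ) := fun h => hne (hvc _ h)
    rw [coe_m1] at h1
    have hi := pnat_one_le i; have hj := pnat_one_le j
    exact ⟨pnat_le (by omega), pnat_le (by omega)⟩
  -- vanishing of derivatives of E₂ f and G f beyond M
  have hEc : ∀ k : ℕ+, (M:ℕ) < (k:ℕ) → d k (E₂ f) = 0 := by
    intro k hk
    rw [E2_eq f N hvN, d_sum]
    apply Finset.sum_eq_zero
    intro t ht
    have ht' : (t:ℕ) ≤ (N:ℕ) := pnat_le' (Finset.mem_Iic.mp ht)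
    rw [d_smul, d_mul, d_p, if_neg, hddc k t (by omega), mul_zero, add_zero, zero_mul, smul_zero]
    intro hc
    rw [hc, pn_add, pn_one] at hk
    omega
  have hGc : ∀ k : ℕ+, (M:ℕ) < (k:ℕ) → d k (G f) = 0 := by
    intro k hk
    rw [cGf, d_sum]
    apply Finset.sum_eq_zero
    intro i _
    rw [d_sum]
    apply Finset.sum_eq_zero
    intro j _
    rw [d_smul, d_mul, d_mul, d_p, d_p, hddc k _ (by omega)]
    rcases Nat.lt_or_ge (N:ℕ) (((i + j - 1 : ℕ+)):ℕ) with h | h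
    · rw [hvc _ h]; simp
    · have hi1 : (k:ℕ) ≠ (i:ℕ) := by rw [coe_m1] at h; have := pnat_one_le j; omega
      have hj1 : (k:ℕ) ≠ (j:ℕ) := by rw [coe_m1] at h; have := pnat_one_le i; omega
      rw [if_neg (fun hc => hi1 (congrArg _ hc)), if_neg (fun hc => hj1 (congrArg _ hc))]
      simp
  -- main finsum conversions
  have cGE : G (E₂ f) = ∑ i ∈ Finset.Iic M, ∑ j ∈ Finset.Iic M,
      (((i : ℕ) : R) + ((j : ℕ) : R) - 1) • (p i * p j * d (i + j - 1) (E₂ f)) := by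
    rw [G_def]
    apply pair_eq (E₂ f) M _ (fun i j => i + j - 1)
    intro i j hne
    have h1 : ¬ (M:ℕ) < ((i + j - 1 : ℕ+):ℕ) := fun h => hne (hEc _ h)
    rw [coe_m1] at h1
    have hi := pnat_one_le i; have hj := pnat_one_le j
    exact ⟨pnat_le (by omega), pnat_le (by omega)⟩
  have cE2G : E₂ (G f) = ∑ k ∈ Finset.Iic M, ((k : ℕ) : R) • (p (k + 1) * d k (G f)) :=
    E2_eq (G f) M (fun k h => hGc k (by by_contra hc; exact h (pnat_le (by omega))))
  have cRHS : (∑ᶠ i : ℕ+, ∑ᶠ j : ℕ+,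
          (((i : ℕ) : R) + ((j : ℕ) : R) - 2) • (p i * p j * d (i + j - 2) f))
      = ∑ i ∈ Finset.Iic M, ∑ j ∈ Finset.Iic M,
          (((i : ℕ) : R) + ((j : ℕ) : R) - 2) • (p i * p j * d (i + j - 2) f) := by
    apply pair_eq f M _ (fun i j => i + j - 2)
    intro i j hne
    have hi := pnat_one_le i; have hj := pnat_one_le j
    rcases Nat.lt_or_ge ((i:ℕ) + (j:ℕ)) 3 with h3 | h3
    · exact ⟨pnat_le (by omega), pnat_le (by omega)⟩
    · have h1 : ¬ (N:ℕ) < ((i + j - 2 : ℕ+):ℕ) := fun h => hne (hvc _ h)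
      rw [coe_m2 i j h3] at h1
      exact ⟨pnat_le (by omega), pnat_le (by omega)⟩
  -- expansions of inner derivatives
  have expE : ∀ m : ℕ+, d m (E₂ f) = ∑ t ∈ Finset.Iic M, ((t:ℕ):R) •
      ((if m = t + 1 then 1 else 0) * d t f + p (t + 1) * d m (d t f)) := by
    intro m
    rw [cE2f, d_sum]
    refine Finset.sum_congr rfl fun t _ => ?_
    rw [d_smul, d_mul, d_p]
  have expG : ∀ k : ℕ+, d k (G f) = ∑ i ∈ Finset.Iic M, ∑ j ∈ Finset.Iic M,
      (((i:ℕ):R) + ((j:ℕ):R) - 1) •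
        (((if k = i then 1 else 0) * p j + p i * (if k = j then 1 else 0)) * d (i + j - 1) f
          + p i * p j * d k (d (i + j - 1) f)) := by
    intro k
    rw [cGf, d_sum]
    refine Finset.sum_congr rfl fun i _ => ?_
    rw [d_sum]
    refine Finset.sum_congr rfl fun j _ => ?_
    rw [d_smul, d_mul, d_mul, d_p, d_p]
  have step1 : G (E₂ f) = ∑ i ∈ Finset.Iic M, ∑ j ∈ Finset.Iic M,
      ((∑ t ∈ Finset.Iic M, (c1 i j * ((t:ℕ):R)) •
          (p i * p j * ((if (i + j - 1 : ℕ+) = t + 1 then (1:A) else 0) * d t f)))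
        + ∑ t ∈ Finset.Iic M, Bb f i j t) := by
    rw [cGE]
    refine Finset.sum_congr rfl fun i _ => Finset.sum_congr rfl fun j _ => ?_
    rw [expE (i + j - 1), Finset.mul_sum, Finset.smul_sum, ← Finset.sum_add_distrib]
    refine Finset.sum_congr rfl fun t _ => ?_
    unfold Bb c1
    simp only [smul_eq_C_mul, map_mul, map_add, map_sub, map_one, map_natCast, map_ofNat]
    ring
  have step5a : E₂ (G f) = ∑ k ∈ Finset.Iic M, ∑ i ∈ Finset.Iic M, ∑ j ∈ Finset.Iic M,
      ((((k:ℕ):R) * c1 i j) • (p (k + 1) * ((if k = i then 1 else 0) * (p j * d (i + j - 1) f)))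
       + (((k:ℕ):R) * c1 i j) • (p (k + 1) * (p i * ((if k = j then 1 else 0) * d (i + j - 1) f)))
       + (((k:ℕ):R) * c1 i j) • (p (k + 1) * (p i * p j * d k (d (i + j - 1) f)))) := by
    rw [cE2G]
    refine Finset.sum_congr rfl fun k _ => ?_
    rw [expG k, Finset.mul_sum, Finset.smul_sum]
    refine Finset.sum_congr rfl fun i _ => ?_
    rw [Finset.mul_sum, Finset.smul_sum]
    refine Finset.sum_congr rfl fun j _ => ?_
    unfold c1
    simp only [smul_eq_C_mul, map_mul, map_add, map_sub, map_one, map_natCast, map_ofNat]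
    ring
  -- collapse of the delta sum in G (E₂ f)
  have collapseA : ∀ i j : ℕ+, (∑ t ∈ Finset.Iic M, (c1 i j * ((t:ℕ):R)) •
      (p i * p j * ((if (i + j - 1 : ℕ+) = t + 1 then (1:A) else 0) * d t f)))
      = Ra f i j := by
    intro i j
    have hi := pnat_one_le i; have hj := pnat_one_le j
    rcases Nat.lt_or_ge ((i:ℕ) + (j:ℕ)) 3 with h3 | h3
    · have hRa : Ra f i j = 0 := by
        unfold Ra
        rw [show (((i:ℕ):R) + ((j:ℕ):R) - 2) = 0 by
          rw [show (i:ℕ) = 1 by omega, show (j:ℕ) = 1 by omega]; norm_num,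
          mul_zero, zero_smul]
      rw [hRa]
      apply Finset.sum_eq_zero
      intro t _
      rw [if_neg, zero_mul, mul_zero, smul_zero]
      intro hc
      have hcc : ((i + j - 1 : ℕ+):ℕ) = ((t + 1 : ℕ+):ℕ) := by rw [hc]
      rw [coe_m1, pn_add, pn_one] at hcc
      have := pnat_one_le t
      omega
    · rw [Finset.sum_eq_single (i + j - 2)]
      · have hidx : (i + j - 1 : ℕ+) = (i + j - 2) + 1 := by
          apply pnat_eq
          rw [coe_m1, pn_add, pn_one, coe_m2 i j h3]
          omega
        rw [if_pos hidx, one_mul]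
        unfold Ra Xb
        congr 2
        rw [coe_m2 i j h3, Nat.cast_sub (by omega : 2 ≤ (i:ℕ) + (j:ℕ))]
        push_cast
        ring
      · intro b _ hb
        rw [if_neg, zero_mul, mul_zero, smul_zero]
        intro hc
        apply hb
        apply pnat_eq
        have hcc : ((i + j - 1 : ℕ+):ℕ) = ((b + 1 : ℕ+):ℕ) := by rw [hc]
        rw [coe_m1, pn_add, pn_one] at hcc
        rw [coe_m2 i j h3]
        omega
      · intro hnot
        have hgt : (M:ℕ) < ((i + j - 2 : ℕ+):ℕ) := by
          by_contra hc
          exact hnot (Finset.mem_Iic.mpr (pnat_le (by omega)))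
        rw [hvc _ (by omega), mul_zero, mul_zero, smul_zero]
  -- index-shift identities
  have hidx1 : ∀ k j : ℕ+, (k + 1 + j - 2 : ℕ+) = k + j - 1 := by
    intro k j
    have hk := pnat_one_le k; have hj := pnat_one_le j
    apply pnat_eq
    rw [coe_m1, coe_m2 (k+1) j (by rw [pn_add, pn_one]; omega), pn_add, pn_one]
    omega
  have hidx2 : ∀ i k : ℕ+, (i + (k + 1) - 2 : ℕ+) = i + k - 1 := by
    intro i k
    have hk := pnat_one_le k; have hi := pnat_one_le i
    apply pnat_eq
    rw [coe_m1, coe_m2 i (k+1) (by rw [pn_add, pn_one]; omega), pn_add, pn_one]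
    omega
  have eSc : ∀ k j : ℕ+, Sc f (k + 1) j
      = (((k:ℕ):R) * c1 k j) • (p (k + 1) * (p j * d (k + j - 1) f)) := by
    intro k j
    unfold Sc Xb c1
    rw [hidx1 k j]
    simp only [pn_add, pn_one, Nat.cast_add, Nat.cast_one, smul_eq_C_mul,
      map_mul, map_add, map_sub, map_one, map_natCast, map_ofNat]
    ring
  have eSd : ∀ i k : ℕ+, Sd f i (k + 1)
      = (((k:ℕ):R) * c1 i k) • (p (k + 1) * (p i * d (i + k - 1) f)) := by
    intro i k
    unfold Sd Xb c1
    rw [hidx2 i k]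
    simp only [pn_add, pn_one, Nat.cast_add, Nat.cast_one, smul_eq_C_mul,
      map_mul, map_add, map_sub, map_one, map_natCast, map_ofNat]
    ring
  have hSc1 : ∀ j : ℕ+, Sc f 1 j = 0 := by
    intro j; unfold Sc
    rw [show (((1:ℕ+):ℕ):R) - 1 = 0 by rw [pn_one]; norm_num, zero_mul, zero_smul]
  have hSd1 : ∀ i : ℕ+, Sd f i 1 = 0 := by
    intro i; unfold Sd
    rw [show (((1:ℕ+):ℕ):R) - 1 = 0 by rw [pn_one]; norm_num, zero_mul, zero_smul]
  have hScM : ∀ j : ℕ+, Sc f (M + 1) j = 0 := by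
    intro j
    have hj := pnat_one_le j; have hN := pnat_one_le N
    have hd : d (M + 1 + j - 2) f = 0 := by
      apply hvc
      rw [coe_m2 (M+1) j (by rw [pn_add, pn_one]; omega), pn_add, pn_one]
      omega
    unfold Sc Xb
    rw [hd, mul_zero, smul_zero]
  have hSdM : ∀ i : ℕ+, Sd f i (M + 1) = 0 := by
    intro i
    have hi := pnat_one_le i; have hN := pnat_one_le N
    have hd : d (i + (M + 1) - 2) f = 0 := by
      apply hvc
      rw [coe_m2 i (M+1) (by rw [pn_add, pn_one]; omega), pn_add, pn_one]
      omega
    unfold Sd Xb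
    rw [hd, mul_zero, smul_zero]
  -- process the three parts of E₂ (G f)
  have hS1 : (∑ k ∈ Finset.Iic M, ∑ i ∈ Finset.Iic M, ∑ j ∈ Finset.Iic M,
        (((k:ℕ):R) * c1 i j) • (p (k + 1) * ((if k = i then 1 else 0) * (p j * d (i + j - 1) f))))
      = ∑ i ∈ Finset.Iic M, ∑ j ∈ Finset.Iic M, Sc f i j := by
    have e1 : ∀ k : ℕ+, k ∈ Finset.Iic M →
        (∑ i ∈ Finset.Iic M, ∑ j ∈ Finset.Iic M,
          (((k:ℕ):R) * c1 i j) • (p (k + 1) * ((if k = i then 1 else 0) * (p j * d (i + j - 1) f))))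
        = ∑ j ∈ Finset.Iic M, Sc f (k + 1) j := by
      intro k hk
      rw [Finset.sum_eq_single k]
      · refine Finset.sum_congr rfl fun j _ => ?_
        rw [if_pos rfl, one_mul, eSc k j]
      · intro b _ hb
        refine Finset.sum_eq_zero fun j _ => ?_
        rw [if_neg (fun hc => hb hc.symm), zero_mul, mul_zero, smul_zero]
      · exact fun h => absurd hk h
    calc (∑ k ∈ Finset.Iic M, ∑ i ∈ Finset.Iic M, ∑ j ∈ Finset.Iic M,
        (((k:ℕ):R) * c1 i j) • (p (k + 1) * ((if k = i then 1 else 0) * (p j * d (i + j - 1) f))))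
        = ∑ k ∈ Finset.Iic M, ∑ j ∈ Finset.Iic M, Sc f (k + 1) j := Finset.sum_congr rfl e1
      _ = ∑ j ∈ Finset.Iic M, ∑ k ∈ Finset.Iic M, Sc f (k + 1) j := Finset.sum_comm
      _ = ∑ j ∈ Finset.Iic M, ∑ k ∈ Finset.Iic M, Sc f k j :=
          Finset.sum_congr rfl fun j _ => shift_sum M (fun i => Sc f i j) (hSc1 j) (hScM j)
      _ = ∑ i ∈ Finset.Iic M, ∑ j ∈ Finset.Iic M, Sc f i j := Finset.sum_comm
  have hS2 : (∑ k ∈ Finset.Iic M, ∑ i ∈ Finset.Iic M, ∑ j ∈ Finset.Iic M,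
        (((k:ℕ):R) * c1 i j) • (p (k + 1) * (p i * ((if k = j then 1 else 0) * d (i + j - 1) f))))
      = ∑ i ∈ Finset.Iic M, ∑ j ∈ Finset.Iic M, Sd f i j := by
    have e2 : ∀ k : ℕ+, k ∈ Finset.Iic M →
        (∑ i ∈ Finset.Iic M, ∑ j ∈ Finset.Iic M,
          (((k:ℕ):R) * c1 i j) • (p (k + 1) * (p i * ((if k = j then 1 else 0) * d (i + j - 1) f))))
        = ∑ i ∈ Finset.Iic M, Sd f i (k + 1) := by
      intro k hk
      refine Finset.sum_congr rfl fun i _ => ?_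
      rw [Finset.sum_eq_single k]
      · rw [if_pos rfl, one_mul, eSd i k]
      · intro b _ hb
        rw [if_neg (fun hc => hb hc.symm), zero_mul, mul_zero, mul_zero, smul_zero]
      · exact fun h => absurd hk h
    calc (∑ k ∈ Finset.Iic M, ∑ i ∈ Finset.Iic M, ∑ j ∈ Finset.Iic M,
        (((k:ℕ):R) * c1 i j) • (p (k + 1) * (p i * ((if k = j then 1 else 0) * d (i + j - 1) f))))
        = ∑ k ∈ Finset.Iic M, ∑ i ∈ Finset.Iic M, Sd f i (k + 1) := Finset.sum_congr rfl e2
      _ = ∑ i ∈ Finset.Iic M, ∑ k ∈ Finset.Iic M, Sd f i (k + 1) := Finset.sum_comm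
      _ = ∑ i ∈ Finset.Iic M, ∑ k ∈ Finset.Iic M, Sd f i k :=
          Finset.sum_congr rfl fun i _ => shift_sum M (fun j => Sd f i j) (hSd1 i) (hSdM i)
  have hS3 : (∑ k ∈ Finset.Iic M, ∑ i ∈ Finset.Iic M, ∑ j ∈ Finset.Iic M,
        (((k:ℕ):R) * c1 i j) • (p (k + 1) * (p i * p j * d k (d (i + j - 1) f))))
      = ∑ i ∈ Finset.Iic M, ∑ j ∈ Finset.Iic M, ∑ t ∈ Finset.Iic M, Bb f i j t := by
    calc (∑ k ∈ Finset.Iic M, ∑ i ∈ Finset.Iic M, ∑ j ∈ Finset.Iic M,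
        (((k:ℕ):R) * c1 i j) • (p (k + 1) * (p i * p j * d k (d (i + j - 1) f))))
        = ∑ i ∈ Finset.Iic M, ∑ k ∈ Finset.Iic M, ∑ j ∈ Finset.Iic M,
            (((k:ℕ):R) * c1 i j) • (p (k + 1) * (p i * p j * d k (d (i + j - 1) f))) :=
          Finset.sum_comm
      _ = ∑ i ∈ Finset.Iic M, ∑ j ∈ Finset.Iic M, ∑ k ∈ Finset.Iic M,
            (((k:ℕ):R) * c1 i j) • (p (k + 1) * (p i * p j * d k (d (i + j - 1) f))) :=
          Finset.sum_congr rfl fun i _ => Finset.sum_comm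
      _ = ∑ i ∈ Finset.Iic M, ∑ j ∈ Finset.Iic M, ∑ t ∈ Finset.Iic M, Bb f i j t := by
          refine Finset.sum_congr rfl fun i _ => Finset.sum_congr rfl fun j _ =>
            Finset.sum_congr rfl fun t _ => ?_
          rw [d_comm t (i + j - 1) f]
          unfold Bb c1
          simp only [smul_eq_C_mul, map_mul, map_add, map_sub, map_one, map_natCast, map_ofNat]
          ring
  -- assemble
  have hGEf : G (E₂ f) = (∑ i ∈ Finset.Iic M, ∑ j ∈ Finset.Iic M, Ra f i j)
      + (∑ i ∈ Finset.Iic M, ∑ j ∈ Finset.Iic M, ∑ t ∈ Finset.Iic M, Bb f i j t) := by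
    rw [step1]
    calc (∑ i ∈ Finset.Iic M, ∑ j ∈ Finset.Iic M,
        ((∑ t ∈ Finset.Iic M, (c1 i j * ((t:ℕ):R)) •
            (p i * p j * ((if (i + j - 1 : ℕ+) = t + 1 then (1:A) else 0) * d t f)))
          + ∑ t ∈ Finset.Iic M, Bb f i j t))
        = ∑ i ∈ Finset.Iic M, ∑ j ∈ Finset.Iic M, (Ra f i j + ∑ t ∈ Finset.Iic M, Bb f i j t) :=
          Finset.sum_congr rfl fun i _ => Finset.sum_congr rfl fun j _ => by rw [collapseA i j]
      _ = _ := by simp only [Finset.sum_add_distrib]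
  have hE2Gf : E₂ (G f) = (∑ i ∈ Finset.Iic M, ∑ j ∈ Finset.Iic M, Sc f i j)
      + (∑ i ∈ Finset.Iic M, ∑ j ∈ Finset.Iic M, Sd f i j)
      + (∑ i ∈ Finset.Iic M, ∑ j ∈ Finset.Iic M, ∑ t ∈ Finset.Iic M, Bb f i j t) := by
    rw [step5a]
    simp only [Finset.sum_add_distrib]
    rw [hS1, hS2, hS3]
  have key : ∀ i j : ℕ+, Ra f i j - Sc f i j - Sd f i j
      = (((i:ℕ):R) + ((j:ℕ):R) - 2) • (p i * p j * d (i + j - 2) f) := by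
    intro i j
    unfold Ra Sc Sd Xb c1
    simp only [smul_eq_C_mul, map_mul, map_add, map_sub, map_one, map_natCast, map_ofNat]
    ring
  rw [cRHS, hGEf, hE2Gf]
  trans ((∑ i ∈ Finset.Iic M, ∑ j ∈ Finset.Iic M, Ra f i j)
      - (∑ i ∈ Finset.Iic M, ∑ j ∈ Finset.Iic M, Sc f i j)
      - (∑ i ∈ Finset.Iic M, ∑ j ∈ Finset.Iic M, Sd f i j))
  · abel
  · simp only [← Finset.sum_sub_distrib]
    exact Finset.sum_congr rfl fun i _ => Finset.sum_congr rfl fun j _ => key i j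

theorem commutator_G_E2 (f : A) :
    G (E₂ f) - E₂ (G f)
      = ∑ᶠ i : ℕ+, ∑ᶠ j : ℕ+,
          (((i : ℕ) : R) + ((j : ℕ) : R) - 2) • (p i * p j * d (i + j - 2) f) := by
  obtain ⟨N, hvN⟩ : ∃ N : ℕ+, ∀ k : ℕ+, ¬ k ≤ N → d k f = 0 := by
    refine ⟨⟨(f.vars.sup fun i : ℕ+ => (i:ℕ)) + 1, Nat.succ_pos _⟩, fun k hk => ?_⟩
    show pderiv k f = 0
    apply pderiv_eq_zero_of_notMem_vars
    intro hmem
    apply hk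
    have hle := Finset.le_sup (f := fun i : ℕ+ => (i:ℕ)) hmem
    exact pnat_le (by simpa using Nat.le_succ_of_le hle)
  exact aux_main f N (N + 2) rfl hvN
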